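/- arXiv:math/0501433 — 3 statements merged into one kernel-verified Lean document; each statement's English description precedes it below -/
import Mathlib

section
/- Let R be a po-ring and let A be a partially ordered right R-module. If A is finitely related, then A is finitely po-presented. -/
/-- A *po-ring*: a ring equipped with a partial order such that addition is
translation-invariant, multiplication by nonnegative elements (on either side) is monotone,
the ring is directed (every element is a difference of two nonnegative elements),
and `0 ≤ 1`. -/
class PORing (R : Type*) extends Ring R, PartialOrder R where
  add_le_add_right' : ∀ a b : R, a ≤ b → ∀ c : R, a + c ≤ b + c
  mul_le_mul_of_nonneg_right' : ∀ a b c : R, a ≤ b → 0 ≤ c → a * c ≤ b * c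
  mul_le_mul_of_nonneg_left' : ∀ a b c : R, a ≤ b → 0 ≤ c → c * a ≤ c * b
  directed' : ∀ x : R, ∃ y z : R, 0 ≤ y ∧ 0 ≤ z ∧ x = y - z
  zero_le_one' : (0 : R) ≤ 1

/-- A *partially ordered right module* over a po-ring `R`: an additive abelian group with a
right `R`-action `rsmul` (written on the right, so `rsmul a ξ` is `aξ`), with the usual
right-module axioms, such that addition is translation-invariant and
`0 ≤ a`, `0 ≤ ξ` imply `0 ≤ aξ`. -/
class PORightModule (R : Type*) [PORing R] (A : Type*) [AddCommGroup A] [PartialOrder A] where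
  rsmul : A → R → A
  add_rsmul : ∀ (a b : A) (r : R), rsmul (a + b) r = rsmul a r + rsmul b r
  rsmul_add : ∀ (a : A) (r s : R), rsmul a (r + s) = rsmul a r + rsmul a s
  rsmul_mul : ∀ (a : A) (r s : R), rsmul a (r * s) = rsmul (rsmul a r) s
  rsmul_one : ∀ a : A, rsmul a 1 = a
  add_le_add_right' : ∀ a b : A, a ≤ b → ∀ c : A, a + c ≤ b + c
  rsmul_nonneg : ∀ (a : A) (r : R), 0 ≤ a → 0 ≤ r → 0 ≤ rsmul a r

open PORightModule

/-- A po-ring is a partially ordered right module over itself. -/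
instance PORing.toPORightModule (R : Type*) [PORing R] : PORightModule R R where
  rsmul := (· * ·)
  add_rsmul := add_mul
  rsmul_add := mul_add
  rsmul_mul a r s := (mul_assoc a r s).symm
  rsmul_one := mul_one
  add_le_add_right' := PORing.add_le_add_right'
  rsmul_nonneg a r ha hr := by
    have h := PORing.mul_le_mul_of_nonneg_right' 0 a r ha hr
    simpa using h

/-- Products of partially ordered right modules, ordered coordinatewise. -/
instance Pi.instPORightModule {R : Type*} [PORing R] {ι : Type*} {A : ι → Type*}
    [∀ i, AddCommGroup (A i)] [∀ i, PartialOrder (A i)] [∀ i, PORightModule R (A i)] :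
    PORightModule R (∀ i, A i) where
  rsmul x r i := rsmul (x i) r
  add_rsmul a b r := funext fun i => add_rsmul (a i) (b i) r
  rsmul_add a r s := funext fun i => rsmul_add (a i) r s
  rsmul_mul a r s := funext fun i => rsmul_mul (a i) r s
  rsmul_one a := funext fun i => rsmul_one (a i)
  add_le_add_right' a b h c := by
    intro i
    exact PORightModule.add_le_add_right' R (a i) (b i) (h i) (c i)
  rsmul_nonneg a r ha hr := by
    intro i
    exact PORightModule.rsmul_nonneg (a i) r (ha i) hr

/-- Binary products of partially ordered right modules, ordered coordinatewise. -/
instance Prod.instPORightModule {R : Type*} [PORing R] {A B : Type*}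
    [AddCommGroup A] [PartialOrder A] [PORightModule R A]
    [AddCommGroup B] [PartialOrder B] [PORightModule R B] :
    PORightModule R (A × B) where
  rsmul x r := (rsmul x.1 r, rsmul x.2 r)
  add_rsmul a b r := by
    refine Prod.ext ?_ ?_ <;> simp [PORightModule.add_rsmul]
  rsmul_add a r s := by
    refine Prod.ext ?_ ?_ <;> simp [PORightModule.rsmul_add]
  rsmul_mul a r s := by
    refine Prod.ext ?_ ?_ <;> simp [PORightModule.rsmul_mul]
  rsmul_one a := by
    refine Prod.ext ?_ ?_ <;> simp [PORightModule.rsmul_one]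
  add_le_add_right' a b h c := by
    rw [Prod.le_def] at h ⊢
    constructor
    · simpa using PORightModule.add_le_add_right' R a.1 b.1 h.1 c.1
    · simpa using PORightModule.add_le_add_right' R a.2 b.2 h.2 c.2
  rsmul_nonneg a r ha hr := by
    rw [Prod.le_def] at ha ⊢
    constructor
    · simpa using PORightModule.rsmul_nonneg a.1 r (by simpa using ha.1) hr
    · simpa using PORightModule.rsmul_nonneg a.2 r (by simpa using ha.2) hr

section Defs

variable (R : Type*) [PORing R]

/-- The product `UX = a₁ξ₁ + ⋯ + aₙξₙ` of a row matrix `U = (a₁,…,aₙ)` with entries in `A`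
and a column matrix `X = (ξ₁,…,ξₙ)ᵗ` with entries in `R`. -/
def rowMul {A : Type*} [AddCommGroup A] [PartialOrder A] [PORightModule R A]
    {n : ℕ} (U : Fin n → A) (X : Fin n → R) : A :=
  ∑ i, rsmul (U i) (X i)

/-- A subset `S` of a partially ordered right `R`-module is a *finitely generated
`R⁺`-subsemimodule* if it is the set of all `R⁺`-linear combinations of some finite subset. -/
def IsFGConeIn {A : Type*} [AddCommGroup A] [PartialOrder A] [PORightModule R A]
    (S : Set A) : Prop :=
  ∃ (k : ℕ) (g : Fin k → A),
    S = { a | ∃ Y : Fin k → R, (∀ i, 0 ≤ Y i) ∧ a = rowMul R g Y }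

/-- `A` is *finitely related at* the row matrix `U ∈ M_{1,n}(A)` if the solution set of the
mixed system `UX ≥ 0, X ≥ 0` is a finitely generated `R⁺`-subsemimodule of `M_{n,1}(R)`. -/
def FinitelyRelatedAt {A : Type*} [AddCommGroup A] [PartialOrder A] [PORightModule R A]
    {n : ℕ} (U : Fin n → A) : Prop :=
  IsFGConeIn R {X : Fin n → R | 0 ≤ rowMul R U X ∧ ∀ i, 0 ≤ X i}

/-- `A` is *finitely po-presented at* the row matrix `U ∈ M_{1,n}(A)` if the solution set of
the system `UX ≥ 0` is a finitely generated `R⁺`-subsemimodule of `M_{n,1}(R)`. -/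
def FinitelyPoPresentedAt {A : Type*} [AddCommGroup A] [PartialOrder A] [PORightModule R A]
    {n : ℕ} (U : Fin n → A) : Prop :=
  IsFGConeIn R {X : Fin n → R | 0 ≤ rowMul R U X}

/-- A row matrix `U` is *spanning* if its entries generate `A` as a right `R`-module, i.e.
every element of `A` is an `R`-linear combination `UX` of the entries. -/
def SpanningRow {A : Type*} [AddCommGroup A] [PartialOrder A] [PORightModule R A]
    {n : ℕ} (U : Fin n → A) : Prop :=
  ∀ a : A, ∃ X : Fin n → R, a = rowMul R U X

variable (A : Type*) [AddCommGroup A] [PartialOrder A] [PORightModule R A]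

/-- `A` is *finitely po-presented* if it is finitely po-presented at some spanning row
matrix. -/
def FinitelyPoPresented : Prop :=
  ∃ (n : ℕ) (U : Fin n → A), SpanningRow R U ∧ FinitelyPoPresentedAt R U

/-- `A` is *finitely related* if it is a finitely generated right `R`-module and is finitely
related at every spanning row matrix. -/
def FinitelyRelatedMod : Prop :=
  (∃ (n : ℕ) (U : Fin n → A), SpanningRow R U) ∧
    ∀ (n : ℕ) (U : Fin n → A), SpanningRow R U → FinitelyRelatedAt R U

/-- `A` is *po-coherent* if it is finitely related at every row matrix of elements of `A`. -/
def PoCoherent : Prop :=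
  ∀ (n : ℕ) (U : Fin n → A), FinitelyRelatedAt R U

end Defs

/-- A po-ring is *right po-coherent* if it is po-coherent as a partially ordered right module
over itself. -/
def RightPoCoherent (R : Type*) [PORing R] : Prop :=
  PoCoherent R R


section MyHelpers

variable {R : Type*} [PORing R] {A : Type*} [AddCommGroup A] [PartialOrder A] [PORightModule R A]

lemma my_rsmul_zero (a : A) : rsmul a (0:R) = 0 := by
  have h := rsmul_add a (0:R) 0
  rw [add_zero] at h
  exact (left_eq_add.mp h)

lemma my_zero_rsmul (r : R) : rsmul (0:A) r = 0 := by
  have h := add_rsmul (0:A) 0 r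
  rw [add_zero] at h
  exact (left_eq_add.mp h)

lemma my_rsmul_sub (a : A) (r s : R) : rsmul a (r - s) = rsmul a r - rsmul a s := by
  have h := rsmul_add a (r - s) s
  rw [sub_add_cancel] at h
  exact eq_sub_of_add_eq h.symm

lemma my_neg_rsmul (a : A) (r : R) : rsmul (-a : A) r = - rsmul a r := by
  have h := add_rsmul a (-a) r
  rw [add_neg_cancel, my_zero_rsmul] at h
  exact (eq_neg_of_add_eq_zero_right h.symm)

lemma my_rsmul_sum {ι : Type*} (s : Finset ι) (f : ι → R) (a : A) :
    rsmul a (∑ i ∈ s, f i) = ∑ i ∈ s, rsmul a (f i) := by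
  classical
  induction s using Finset.cons_induction with
  | empty => simp [my_rsmul_zero]
  | cons i s hi ih => rw [Finset.sum_cons, rsmul_add, ih, Finset.sum_cons]

lemma my_sum_rsmul {ι : Type*} (s : Finset ι) (f : ι → A) (r : R) :
    rsmul (∑ i ∈ s, f i) r = ∑ i ∈ s, rsmul (f i) r := by
  classical
  induction s using Finset.cons_induction with
  | empty => simp [my_zero_rsmul]
  | cons i s hi ih => rw [Finset.sum_cons, add_rsmul, ih, Finset.sum_cons]

lemma my_add_nonneg (R : Type*) [PORing R] {A : Type*} [AddCommGroup A] [PartialOrder A]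
    [PORightModule R A] {a b : A} (ha : 0 ≤ a) (hb : 0 ≤ b) : 0 ≤ a + b := by
  have h := PORightModule.add_le_add_right' R 0 a ha b
  rw [zero_add] at h
  exact le_trans hb h

lemma my_sum_nonneg (R : Type*) [PORing R] {A : Type*} [AddCommGroup A] [PartialOrder A]
    [PORightModule R A] {ι : Type*} (s : Finset ι) (f : ι → A) (hf : ∀ i ∈ s, 0 ≤ f i) :
    0 ≤ ∑ i ∈ s, f i := by
  classical
  induction s using Finset.cons_induction with
  | empty => simp
  | cons i s hi ih =>
      rw [Finset.sum_cons]
      exact my_add_nonneg R (hf i (Finset.mem_cons_self i s))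
        (ih fun j hj => hf j (Finset.mem_cons_of_mem hj))

@[simp] lemma my_pi_rsmul_apply {ι : Type*} {B : ι → Type*}
    [∀ i, AddCommGroup (B i)] [∀ i, PartialOrder (B i)] [∀ i, PORightModule R (B i)]
    (x : ∀ i, B i) (r : R) (i : ι) : rsmul x r i = rsmul (x i) r := rfl

@[simp] lemma my_ring_rsmul (a r : R) : rsmul a r = a * r := rfl

end MyHelpers

/-- Let `R` be a po-ring and `A` a partially ordered right `R`-module.
If `A` is finitely related, then `A` is finitely po-presented. -/
theorem finitelyRelated_imp_finitelyPoPresented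
    (R A : Type*) [PORing R] [AddCommGroup A] [PartialOrder A] [PORightModule R A]
    (h : FinitelyRelatedMod R A) :
    FinitelyPoPresented R A := by
  classical
  obtain ⟨⟨n, U, hU⟩, hrel⟩ := h
  -- the doubled row V = (U, -U)
  set V : Fin (n + n) → A := Fin.append U (fun i => -U i) with hVdef
  -- key computation: V W = U (W_left - W_right)
  have key : ∀ W : Fin (n + n) → R,
      rowMul R V W = rowMul R U (fun i => W (Fin.castAdd n i) - W (Fin.natAdd n i)) := by
    intro W
    simp only [rowMul, hVdef, Fin.sum_univ_add, Fin.append_left, Fin.append_right,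
      my_rsmul_sub, my_neg_rsmul, Finset.sum_sub_distrib]
    rw [Finset.sum_neg_distrib]
    abel
  have hVspan : SpanningRow R V := by
    intro a
    obtain ⟨X, hX⟩ := hU a
    refine ⟨Fin.append X 0, ?_⟩
    rw [key]
    have : (fun i => Fin.append X (0 : Fin n → R) (Fin.castAdd n i)
        - Fin.append X (0 : Fin n → R) (Fin.natAdd n i)) = X := by
      funext i
      rw [Fin.append_left, Fin.append_right, Pi.zero_apply, sub_zero]
    rw [this, hX]
  obtain ⟨k, g, hg⟩ := hrel (n + n) V hVspan
  -- each generator lies in the solution cone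
  have hgmem : ∀ j : Fin k, 0 ≤ rowMul R V (g j) ∧ ∀ i, 0 ≤ g j i := by
    intro j
    have : g j ∈ {X : Fin (n + n) → R | 0 ≤ rowMul R V X ∧ ∀ i, 0 ≤ X i} := by
      rw [hg]
      refine ⟨fun j' => if j' = j then 1 else 0, fun j' => ?_, ?_⟩
      · dsimp only; split
        · exact PORing.zero_le_one'
        · exact le_refl 0
      · have : rowMul R g (fun j' => if j' = j then 1 else 0) = g j := by
          rw [rowMul, Finset.sum_eq_single j]
          · simp [rsmul_one]
          · intro j' _ hj'
            simp [hj', my_rsmul_zero]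
          · intro hj; exact absurd (Finset.mem_univ j) hj
        rw [this]
    exact this
  -- generators for the po-presentation cone
  set hgen : Fin k → (Fin n → R) :=
    fun j i => g j (Fin.castAdd n i) - g j (Fin.natAdd n i) with hgen_def
  refine ⟨n, U, hU, k, hgen, ?_⟩
  ext X
  simp only [Set.mem_setOf_eq]
  constructor
  · -- X with UX ≥ 0 is a cone combination
    intro hX
    choose p q hpq using fun i => PORing.directed' (X i)
    set W : Fin (n + n) → R := Fin.append p q with hWdef
    have hWl : ∀ i, W (Fin.castAdd n i) = p i := fun i => Fin.append_left p q i
    have hWr : ∀ i, W (Fin.natAdd n i) = q i := fun i => Fin.append_right p q i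
    have hXpq : X = fun i => p i - q i := funext fun i => (hpq i).2.2
    have hW : W ∈ {X : Fin (n + n) → R | 0 ≤ rowMul R V X ∧ ∀ i, 0 ≤ X i} := by
      constructor
      · rw [key]
        have : (fun i => W (Fin.castAdd n i) - W (Fin.natAdd n i)) = X := by
          funext i
          rw [hWl, hWr, ← (hpq i).2.2]
        rw [this]; exact hX
      · intro i
        refine Fin.addCases (fun i => ?_) (fun i => ?_) i
        · rw [hWl]; exact (hpq i).1
        · rw [hWr]; exact (hpq i).2.1
    rw [hg] at hW
    obtain ⟨Y, hY0, hWY⟩ := hW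
    refine ⟨Y, hY0, ?_⟩
    funext i
    have hc : W (Fin.castAdd n i) = ∑ j, g j (Fin.castAdd n i) * Y j := by
      rw [hWY]; simp [rowMul, Finset.sum_apply]
    have hn : W (Fin.natAdd n i) = ∑ j, g j (Fin.natAdd n i) * Y j := by
      rw [hWY]; simp [rowMul, Finset.sum_apply]
    have hXi : X i = W (Fin.castAdd n i) - W (Fin.natAdd n i) := by
      rw [hWl, hWr]; exact (hpq i).2.2
    rw [hXi, hc, hn, ← Finset.sum_sub_distrib]
    simp [rowMul, Finset.sum_apply, hgen_def, sub_mul]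
  · -- cone combinations X satisfy UX ≥ 0
    rintro ⟨Y, hY0, rfl⟩
    have hrw : rowMul R U (rowMul R hgen Y)
        = ∑ j, rsmul (rowMul R U (hgen j)) (Y j) := by
      simp only [rowMul, Finset.sum_apply, my_pi_rsmul_apply, my_ring_rsmul,
        my_rsmul_sum, rsmul_mul, my_sum_rsmul]
      rw [Finset.sum_comm]
    rw [hrw]
    refine my_sum_nonneg R _ _ fun j _ => ?_
    have hVgj : 0 ≤ rowMul R V (g j) := (hgmem j).1
    have : rowMul R U (hgen j) = rowMul R V (g j) := by
      rw [key]
    rw [this]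
    exact rsmul_nonneg _ _ hVgj (hY0 j)
end

section
/- Let R be a po-ring and let A be a finitely generated partially ordered right R-module. Then A is finitely po-presented if and only if A is finitely po-presented at every spanning row matrix of A. -/
open PORightModule

/-!
If `U` and `V` are row matrices generating the same submodule, say `V = UC` and `U = VD`, then
`VY ≥ 0` iff `CY` solves `UX ≥ 0`, and every `Y` splits as `Y = D(CY) + (Y - DCY)` with
`V(Y - DCY) = 0`. Hence the solution set of `VY ≥ 0` is the image under `D` of that of
`UX ≥ 0` plus the image of `I - DC`; the first is finitely generated over `R⁺` when the
solution set for `U` is, and the second is generated by the columns of `I - DC` and their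
negatives because `R` is directed.
-/

open scoped Pointwise

namespace PORightModule

variable {R : Type*} [PORing R] {A : Type*} [AddCommGroup A] [PartialOrder A]
  [PORightModule R A]

variable (A) in
def rsmulRight (r : R) : A →+ A := AddMonoidHom.mk' (rsmul · r) fun a b => add_rsmul a b r

def rsmulLeft (a : A) : R →+ A := AddMonoidHom.mk' (rsmul a) (rsmul_add a)

lemma neg_rsmul (a : A) (r : R) : rsmul (-a) r = -rsmul a r := (rsmulRight A r).map_neg a

lemma rsmul_sum {ι : Type*} (s : Finset ι) (a : A) (f : ι → R) :
    rsmul a (∑ i ∈ s, f i) = ∑ i ∈ s, rsmul a (f i) :=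
  map_sum (rsmulLeft a) f s

lemma sum_rsmul {ι : Type*} (s : Finset ι) (f : ι → A) (r : R) :
    rsmul (∑ i ∈ s, f i) r = ∑ i ∈ s, rsmul (f i) r :=
  map_sum (rsmulRight A r) f s

end PORightModule

section

variable {R : Type*} [PORing R] {A : Type*} [AddCommGroup A] [PartialOrder A]
  [PORightModule R A]

lemma rowMul_add {n : ℕ} (U : Fin n → A) (X Y : Fin n → R) :
    rowMul R U (X + Y) = rowMul R U X + rowMul R U Y := by
  simp only [rowMul, Pi.add_apply, rsmul_add, Finset.sum_add_distrib]

lemma rowMul_sub {n : ℕ} (U : Fin n → A) (X Y : Fin n → R) :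
    rowMul R U (X - Y) = rowMul R U X - rowMul R U Y :=
  map_sub (AddMonoidHom.mk' (rowMul R U) (rowMul_add U)) X Y

lemma rowMul_sub_left {n : ℕ} (U V : Fin n → A) (X : Fin n → R) :
    rowMul R (U - V) X = rowMul R U X - rowMul R V X := by
  simp only [rowMul, Pi.sub_apply, sub_eq_add_neg, add_rsmul, neg_rsmul,
    Finset.sum_add_distrib, Finset.sum_neg_distrib]

lemma rowMul_neg_left {n : ℕ} (U : Fin n → A) (X : Fin n → R) :
    rowMul R (-U) X = -rowMul R U X := by
  simp only [rowMul, Pi.neg_apply, neg_rsmul, Finset.sum_neg_distrib]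

lemma rowMul_single_left {m : ℕ} (Y : Fin m → R) :
    rowMul R (fun j => (Pi.single j 1 : Fin m → R)) Y = Y := by
  funext i
  simp [rowMul, Finset.sum_apply, rsmul, Pi.single_apply]

lemma rowMul_rowMul {n m : ℕ} (W : Fin n → A) (C : Fin m → Fin n → R) (Y : Fin m → R) :
    rowMul R W (rowMul R C Y) = rowMul R (fun j => rowMul R W (C j)) Y := by
  simp only [rowMul, Finset.sum_apply, rsmul_sum, sum_rsmul]
  rw [Finset.sum_comm]
  exact Finset.sum_congr rfl fun j _ => Finset.sum_congr rfl fun i _ => rsmul_mul _ _ _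

lemma rowMul_addCases {k l : ℕ} (g : Fin k → A) (h : Fin l → A) (Y : Fin (k + l) → R) :
    rowMul R (Fin.addCases g h) Y =
      rowMul R g (fun i => Y (Fin.castAdd l i)) + rowMul R h (fun i => Y (Fin.natAdd k i)) := by
  simp only [rowMul, Fin.sum_univ_add, Fin.addCases_left, Fin.addCases_right]

lemma addCases_nonneg {k l : ℕ} {Y : Fin k → R} {Z : Fin l → R}
    (hY : ∀ i, 0 ≤ Y i) (hZ : ∀ i, 0 ≤ Z i) (i : Fin (k + l)) :
    0 ≤ (Fin.addCases Y Z : Fin (k + l) → R) i := by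
  induction i using Fin.addCases <;> simp [hY, hZ]

lemma IsFGConeIn.add {S T : Set A} (hS : IsFGConeIn R S) (hT : IsFGConeIn R T) :
    IsFGConeIn R (S + T) := by
  obtain ⟨k, g, rfl⟩ := hS
  obtain ⟨l, h, rfl⟩ := hT
  refine ⟨k + l, Fin.addCases g h, ?_⟩
  ext a
  simp only [Set.mem_add, Set.mem_ofPred_eq]
  constructor
  · rintro ⟨_, ⟨Y, hY, rfl⟩, _, ⟨Z, hZ, rfl⟩, rfl⟩
    exact ⟨Fin.addCases Y Z, addCases_nonneg hY hZ, by simp [rowMul_addCases]⟩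
  · rintro ⟨Y, hY, rfl⟩
    exact ⟨_, ⟨_, fun i => hY _, rfl⟩, _, ⟨_, fun i => hY _, rfl⟩, (rowMul_addCases g h Y).symm⟩

lemma IsFGConeIn.image_rowMul {n : ℕ} {S : Set (Fin n → R)} (hS : IsFGConeIn R S)
    (D : Fin n → A) : IsFGConeIn R (rowMul R D '' S) := by
  obtain ⟨k, g, rfl⟩ := hS
  refine ⟨k, fun l => rowMul R D (g l), ?_⟩
  ext a
  simp only [Set.mem_image, Set.mem_ofPred_eq]
  constructor
  · rintro ⟨_, ⟨Y, hY, rfl⟩, rfl⟩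
    exact ⟨Y, hY, rowMul_rowMul D g Y⟩
  · rintro ⟨Y, hY, rfl⟩
    exact ⟨_, ⟨Y, hY, rfl⟩, rowMul_rowMul D g Y⟩

lemma isFGConeIn_range_rowMul {m : ℕ} (w : Fin m → A) :
    IsFGConeIn R (Set.range (rowMul R w)) := by
  have rowMul_addCases_neg (Y : Fin (m + m) → R) :
      rowMul R (Fin.addCases w (-w)) Y =
        rowMul R w ((fun i => Y (Fin.castAdd m i)) - fun i => Y (Fin.natAdd m i)) := by
    rw [rowMul_addCases, rowMul_neg_left, rowMul_sub, sub_eq_add_neg]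
  refine ⟨m + m, Fin.addCases w (-w), ?_⟩
  ext a
  simp only [Set.mem_range, Set.mem_ofPred_eq]
  constructor
  · rintro ⟨Y, rfl⟩
    choose α β hα hβ hαβ using fun j => PORing.directed' (Y j)
    refine ⟨Fin.addCases α β, addCases_nonneg hα hβ, ?_⟩
    rw [rowMul_addCases_neg]
    simp only [Fin.addCases_left, Fin.addCases_right]
    exact congrArg _ (funext hαβ)
  · rintro ⟨Y, -, rfl⟩
    exact ⟨_, (rowMul_addCases_neg Y).symm⟩

lemma setOf_rowMul_nonneg_eq_of_rowMul_eq {n m : ℕ} {U : Fin n → A} {V : Fin m → A}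
    {C : Fin m → Fin n → R} {D : Fin n → Fin m → R}
    (hC : ∀ j, rowMul R U (C j) = V j) (hD : ∀ i, rowMul R V (D i) = U i) :
    {Y | 0 ≤ rowMul R V Y} = rowMul R D '' {X | 0 ≤ rowMul R U X} +
      Set.range (rowMul R ((fun j => Pi.single j 1) - fun j => rowMul R D (C j))) := by
  have hVY (Y : Fin m → R) : rowMul R V Y = rowMul R U (rowMul R C Y) := by
    rw [rowMul_rowMul, funext hC]
  have hVD (X : Fin n → R) : rowMul R V (rowMul R D X) = rowMul R U X := by
    rw [rowMul_rowMul, funext hD]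
  have hW (Y : Fin m → R) :
      rowMul R ((fun j => Pi.single j 1) - fun j => rowMul R D (C j)) Y =
        Y - rowMul R D (rowMul R C Y) := by
    rw [rowMul_sub_left, rowMul_single_left, rowMul_rowMul]
  ext Y
  constructor
  · intro hY
    refine ⟨_, ⟨rowMul R C Y, ?_, rfl⟩, _, ⟨Y, rfl⟩, ?_⟩
    · rwa [Set.mem_ofPred_eq, ← hVY]
    · simp only [hW, add_sub_cancel]
  · rintro ⟨_, ⟨X, hX, rfl⟩, _, ⟨Z, rfl⟩, rfl⟩
    rw [Set.mem_ofPred_eq, rowMul_add, hVD, hW, rowMul_sub, hVD, ← hVY, sub_self, add_zero]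
    exact hX

theorem FinitelyPoPresentedAt.of_rowMul_eq {n m : ℕ} {U : Fin n → A} {V : Fin m → A}
    {C : Fin m → Fin n → R} {D : Fin n → Fin m → R}
    (hC : ∀ j, rowMul R U (C j) = V j) (hD : ∀ i, rowMul R V (D i) = U i)
    (hU : FinitelyPoPresentedAt R U) : FinitelyPoPresentedAt R V := by
  rw [FinitelyPoPresentedAt, setOf_rowMul_nonneg_eq_of_rowMul_eq hC hD]
  exact (hU.image_rowMul D).add (isFGConeIn_range_rowMul _)

theorem FinitelyPoPresentedAt.of_spanningRow {n m : ℕ} {U : Fin n → A} {V : Fin m → A}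
    (hU : SpanningRow R U) (hV : SpanningRow R V) (h : FinitelyPoPresentedAt R U) :
    FinitelyPoPresentedAt R V := by
  choose C hC using fun j => hU (V j)
  choose D hD using fun i => hV (U i)
  exact h.of_rowMul_eq (fun j => (hC j).symm) (fun i => (hD i).symm)

end

/-- Let `R` be a po-ring and `A` a finitely generated partially ordered right
`R`-module. Then `A` is finitely po-presented iff it is finitely po-presented at every
spanning row matrix of `A`. -/
theorem finitelyPoPresented_iff_at_every_spanning
    (R A : Type*) [PORing R] [AddCommGroup A] [PartialOrder A] [PORightModule R A]
    (hfg : ∃ (n : ℕ) (U : Fin n → A), SpanningRow R U) :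
    FinitelyPoPresented R A ↔
      ∀ (n : ℕ) (U : Fin n → A), SpanningRow R U → FinitelyPoPresentedAt R U := by
  constructor
  · rintro ⟨n, U, hU, hUfp⟩ m V hV
    exact hUfp.of_spanningRow hU hV
  · obtain ⟨n, U, hU⟩ := hfg
    exact fun h => ⟨n, U, hU, h n U hU⟩
end

section
/- Let R be a right po-coherent po-ring and let n ≥ 0. Then Rⁿ, partially ordered coordinatewise, is a po-coherent partially ordered right R-module. -/
open PORightModule

section Aux

variable {R : Type*} [PORing R]

lemma rowMul_R_eq {k : ℕ} (V Y : Fin k → R) : rowMul R V Y = ∑ t, V t * Y t := rfl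

lemma rowMul_pi_apply {m k : ℕ} (g : Fin k → Fin m → R) (Y : Fin k → R) (i : Fin m) :
    rowMul R g Y i = ∑ t, g t i * Y t := by
  unfold rowMul
  rw [Finset.sum_apply]
  rfl

/-- Key step: cutting a finitely generated cone in `Rᵐ` by one linear inequality. -/
lemma cone_cut (hR : RightPoCoherent R) {m k : ℕ} (g : Fin k → Fin m → R)
    (v : Fin m → R) :
    ∃ (k' : ℕ) (g' : Fin k' → Fin m → R),
      {X : Fin m → R | (∃ Y : Fin k → R, (∀ t, 0 ≤ Y t) ∧ X = rowMul R g Y) ∧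
          0 ≤ ∑ i, v i * X i}
        = {X : Fin m → R | ∃ Z : Fin k' → R, (∀ s, 0 ≤ Z s) ∧ X = rowMul R g' Z} := by
  set V : Fin k → R := fun t => ∑ i, v i * g t i with hV
  obtain ⟨l, h, hh⟩ := hR k V
  -- the crucial computation: ⟨v, rowMul g Y⟩ = rowMul V Y
  have key : ∀ Y : Fin k → R, ∑ i, v i * (rowMul R g Y) i = rowMul R V Y := by
    intro Y
    rw [rowMul_R_eq]
    calc ∑ i, v i * (rowMul R g Y) i
        = ∑ i, ∑ t, v i * g t i * Y t := by
          refine Finset.sum_congr rfl fun i _ => ?_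
          rw [rowMul_pi_apply, Finset.mul_sum]
          exact Finset.sum_congr rfl fun t _ => (mul_assoc _ _ _).symm
      _ = ∑ t, ∑ i, v i * g t i * Y t := Finset.sum_comm
      _ = ∑ t, V t * Y t := by
          refine Finset.sum_congr rfl fun t _ => ?_
          rw [hV, Finset.sum_mul]
  -- bilinearity
  have bil : ∀ Z : Fin l → R,
      rowMul R g (rowMul R h Z) = rowMul R (fun s => rowMul R g (h s)) Z := by
    intro Z
    funext i
    rw [rowMul_pi_apply, rowMul_pi_apply]
    calc ∑ t, g t i * (rowMul R h Z) t
        = ∑ t, ∑ s, g t i * h s t * Z s := by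
          refine Finset.sum_congr rfl fun t _ => ?_
          rw [rowMul_pi_apply, Finset.mul_sum]
          exact Finset.sum_congr rfl fun s _ => (mul_assoc _ _ _).symm
      _ = ∑ s, ∑ t, g t i * h s t * Z s := Finset.sum_comm
      _ = ∑ s, (rowMul R g (h s)) i * Z s := by
          refine Finset.sum_congr rfl fun s _ => ?_
          rw [rowMul_pi_apply, Finset.sum_mul]
  refine ⟨l, fun s => rowMul R g (h s), ?_⟩
  ext X
  constructor
  · rintro ⟨⟨Y, hY, rfl⟩, hvX⟩
    rw [key] at hvX
    have : Y ∈ {Y : Fin k → R | 0 ≤ rowMul R V Y ∧ ∀ t, 0 ≤ Y t} := ⟨hvX, hY⟩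
    rw [hh] at this
    obtain ⟨Z, hZ, rfl⟩ := this
    exact ⟨Z, hZ, bil Z⟩
  · rintro ⟨Z, hZ, rfl⟩
    have hmem : rowMul R h Z ∈ {Y : Fin k → R | 0 ≤ rowMul R V Y ∧ ∀ t, 0 ≤ Y t} := by
      rw [hh]; exact ⟨Z, hZ, rfl⟩
    obtain ⟨hVY, hYpos⟩ := hmem
    refine ⟨⟨rowMul R h Z, hYpos, (bil Z).symm⟩, ?_⟩
    show (0 : R) ≤ ∑ i, v i * (rowMul R (fun s => rowMul R g (h s)) Z) i
    rw [← bil Z, key]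
    exact hVY

/-- The solution set of a finite family of linear inequalities together with positivity
constraints is a finitely generated cone. -/
lemma cone_family (hR : RightPoCoherent R) (m : ℕ) :
    ∀ (p : ℕ) (v : Fin p → Fin m → R),
      ∃ (k : ℕ) (g : Fin k → Fin m → R),
        {X : Fin m → R | (∀ i, 0 ≤ X i) ∧ ∀ j, 0 ≤ ∑ i, v j i * X i}
          = {X : Fin m → R | ∃ Y : Fin k → R, (∀ t, 0 ≤ Y t) ∧ X = rowMul R g Y} := by
  intro p
  induction p with
  | zero =>
    intro v
    refine ⟨m, fun t => Pi.single t (1 : R), ?_⟩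
    have hid : ∀ X : Fin m → R, rowMul R (fun t => Pi.single t (1 : R)) X = X := by
      intro X
      funext i
      rw [rowMul_pi_apply]
      simp [Pi.single_apply]
    ext X
    constructor
    · rintro ⟨hX, -⟩
      exact ⟨X, hX, (hid X).symm⟩
    · rintro ⟨Y, hY, rfl⟩
      rw [hid]
      exact ⟨hY, fun j => j.elim0⟩
  | succ p ih =>
    intro v
    obtain ⟨k, g, hg⟩ := ih (fun j => v j.succ)
    obtain ⟨k', g', hg'⟩ := cone_cut hR g (v 0)
    refine ⟨k', g', ?_⟩
    rw [← hg']
    ext X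
    simp only [Set.mem_setOf_eq, Fin.forall_fin_succ]
    have hgm := Set.ext_iff.mp hg X
    simp only [Set.mem_setOf_eq] at hgm
    constructor
    · rintro ⟨hX, h0, hs⟩
      exact ⟨hgm.mp ⟨hX, hs⟩, h0⟩
    · rintro ⟨hE, h0⟩
      obtain ⟨hX, hs⟩ := hgm.mpr hE
      exact ⟨hX, h0, hs⟩

end Aux

/-- Let `R` be a right po-coherent po-ring and `n ≥ 0`.  Then `Rⁿ`,
partially ordered coordinatewise, is a po-coherent partially ordered right `R`-module. -/
theorem poCoherent_pi (R : Type*) [PORing R] (hR : RightPoCoherent R) (n : ℕ) :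
    PoCoherent R (Fin n → R) := by
  intro m U
  obtain ⟨k, g, hg⟩ := cone_family hR m n (fun j i => U i j)
  refine ⟨k, g, ?_⟩
  rw [← hg]
  ext X
  simp only [Set.mem_setOf_eq]
  constructor
  · rintro ⟨hU, hX⟩
    refine ⟨hX, fun j => ?_⟩
    have := hU j
    rwa [rowMul_pi_apply] at this
  · rintro ⟨hX, hU⟩
    refine ⟨fun j => ?_, hX⟩
    rw [rowMul_pi_apply]
    exact hU j
end
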